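/- Let ℕ (including 0) carry the quasi-metric d(n,m) = 0 if m ∈ {0,n} and d(n,m) = 1 otherwise, with base point 0. Then the normed cone SLip₀(ℕ,d) of semi-Lipschitz functions vanishing at 0 is exactly the cone ℓ^∞₊(ℕ) of bounded nonnegative sequences (vanishing at index 0), and for every such y the semi-Lipschitz constant ‖y|_S equals sup_n y(n). -/

import Mathlib

noncomputable def dNat (n m : ℕ) : ℝ := if m = 0 ∨ m = n then 0 else 1

/-!
Testing the semi-Lipschitz inequality at the pairs `(n, 0)` and `(0, m)` shows that, when
`y 0 = 0`, `y` is `L`-semi-Lipschitz exactly when `y ≥ 0` and `L` bounds `y` from above. The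
admissible constants are therefore the upper bounds of `y`, whose infimum is `sup y`; requiring
them to be positive does not change the infimum, since `sup y ≥ y 0 = 0`.
-/

open Set

theorem csInf_Ioi_inter_Ici {α : Type*} [ConditionallyCompleteLinearOrder α] [DenselyOrdered α]
    [NoMaxOrder α] {a b : α} (hba : b ≤ a) : sInf (Ioi b ∩ Ici a) = a := by
  rcases hba.lt_or_eq with hlt | rfl
  · rw [inter_eq_right.mpr (show Ici a ⊆ Ioi b from fun _ hx => hlt.trans_le hx), csInf_Ici]
  · rw [inter_eq_left.mpr Ioi_subset_Ici_self, csInf_Ioi]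

def SemiLipschitzWith (L : ℝ) (y : ℕ → ℝ) : Prop :=
  ∀ n m, y m - y n ≤ L * dNat n m

lemma dNat_zero_right (n : ℕ) : dNat n 0 = 0 := if_pos (Or.inl rfl)

lemma dNat_self (n : ℕ) : dNat n n = 0 := if_pos (Or.inr rfl)

lemma dNat_of_ne {n m : ℕ} (hm : m ≠ 0) (hmn : m ≠ n) : dNat n m = 1 :=
  if_neg (not_or.mpr ⟨hm, hmn⟩)

theorem semiLipschitzWith_iff {L : ℝ} {y : ℕ → ℝ} (h0 : y 0 = 0) :
    SemiLipschitzWith L y ↔ (∀ n, 0 ≤ y n) ∧ L ∈ upperBounds (range y) := by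
  constructor
  · intro hy
    have hnonneg (n : ℕ) : 0 ≤ y n := by
      simpa [dNat_zero_right, h0] using hy n 0
    refine ⟨hnonneg, ?_⟩
    rintro _ ⟨m, rfl⟩
    obtain rfl | hm := eq_or_ne m 0
    · have h01 := hy 0 1
      rw [dNat_of_ne one_ne_zero one_ne_zero, h0, mul_one] at h01
      linarith [hnonneg 1]
    · simpa [dNat_of_ne hm hm, h0] using hy 0 m
  · rintro ⟨hnonneg, hL⟩ n m
    by_cases hm : m = 0
    · simpa [hm, h0, dNat_zero_right] using hnonneg n
    by_cases hmn : m = n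
    · simp [hmn, dNat_self]
    · rw [dNat_of_ne hm hmn, mul_one]
      linarith [hnonneg n, hL (mem_range_self m)]

/-- For `(ℕ, d)` with base point `0`, the semi-Lipschitz functions vanishing
at `0` are exactly the bounded nonnegative sequences, and the semi-Lipschitz
constant equals the supremum of the sequence. -/
theorem SLip_of_discrete_quasiMetric_nat (y : ℕ → ℝ) (h0 : y 0 = 0) :
    ((∃ L : ℝ, 0 ≤ L ∧ ∀ n m, y m - y n ≤ L * dNat n m) ↔
      ((∀ n, 0 ≤ y n) ∧ BddAbove (Set.range y))) ∧
    ((∃ L : ℝ, 0 ≤ L ∧ ∀ n m, y m - y n ≤ L * dNat n m) →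
      sInf {L : ℝ | 0 < L ∧ ∀ n m, y m - y n ≤ L * dNat n m} = ⨆ n, y n) := by
  have hiff (L : ℝ) := semiLipschitzWith_iff (L := L) h0
  have upper_nonneg {L : ℝ} (hL : L ∈ upperBounds (range y)) : 0 ≤ L :=
    h0 ▸ hL (mem_range_self 0)
  have hsemi_iff : (∃ L : ℝ, 0 ≤ L ∧ SemiLipschitzWith L y) ↔
      (∀ n, 0 ≤ y n) ∧ BddAbove (range y) := by
    simp only [hiff]
    exact ⟨fun ⟨L, _, hy, hL⟩ => ⟨hy, L, hL⟩, fun ⟨hy, L, hL⟩ => ⟨L, upper_nonneg hL, hy, hL⟩⟩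
  refine ⟨hsemi_iff, fun hex => ?_⟩
  obtain ⟨hnonneg, hbdd⟩ := hsemi_iff.mp hex
  have hset : {L : ℝ | 0 < L ∧ SemiLipschitzWith L y} = Ioi 0 ∩ Ici (⨆ n, y n) := by
    ext L
    simp [hiff, hnonneg, (isLUB_ciSup hbdd).upperBounds_eq]
  exact hset ▸ csInf_Ioi_inter_Ici (upper_nonneg (isLUB_ciSup hbdd).1)
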